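/- Let n ≥ 4 and let M be an n×n symmetric positive definite matrix with integer entries whose entries have greatest common divisor 1, with associated quadratic form Q(v) = vᵀMv. Let A_{a,m} be an admissible arithmetic progression such that no element of A_{a,m} is represented by Q over ℤ (i.e., for every λ ∈ A_{a,m} there is no v ∈ ℤ^n with vᵀMv = λ). Then there exists a prime p dividing m such that a is not represented by Q over the p-adic integers ℤ_p. -/

import Mathlib

open Matrix

/-- The arithmetic progression `A_{a,m} = {a + m·x : x ∈ ℕ ∪ {0}}`. -/
def AP (a m : ℕ) : Set ℕ := {n | ∃ x : ℕ, n = a + m * x}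

/-- `A_{a,m}` (with `0 < a < m`) is admissible if `ord_p a < ord_p m`
for every prime `p` dividing `m`. -/
def Admissible (a m : ℕ) : Prop :=
  0 < a ∧ a < m ∧ ∀ p : ℕ, p.Prime → p ∣ m → padicValNat p a < padicValNat p m

/-!
If `a` were represented over `ℤ_p` for every prime `p ∣ m`, reducing modulo `p ^ k` and gluing
with the Chinese remainder theorem would represent `a` over `ℤ/mℤ`. Lifting such a vector to `ℤⁿ`
gives a value of `Q` that is `≡ a (mod m)` and nonnegative, since `Q` is positive definite; as
`a < m`, that value lies in `A_{a,m}`, contradicting the exclusion of the progression.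
-/

namespace Matrix

variable {ι : Type*} [Fintype ι]

def RepresentsOver (M : Matrix ι ι ℤ) (R : Type*) [CommRing R] (a : R) : Prop :=
  ∃ v : ι → R, v ⬝ᵥ M.map (Int.cast : ℤ → R) *ᵥ v = a

theorem map_dotProduct_mulVec_intCast {R S : Type*} [CommRing R] [CommRing S]
    (M : Matrix ι ι ℤ) (f : R →+* S) (v : ι → R) :
    f (v ⬝ᵥ M.map (Int.cast : ℤ → R) *ᵥ v) = (f ∘ v) ⬝ᵥ M.map (Int.cast : ℤ → S) *ᵥ (f ∘ v) := by
  simp [dotProduct, mulVec, map_sum]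

namespace RepresentsOver

variable {M : Matrix ι ι ℤ} {R S : Type*} [CommRing R] [CommRing S]

theorem map {a : R} (h : M.RepresentsOver R a) (f : R →+* S) : M.RepresentsOver S (f a) := by
  obtain ⟨v, hv⟩ := h
  exact ⟨f ∘ v, by rw [← map_dotProduct_mulVec_intCast, hv]⟩

theorem prod {a : R} {b : S} (ha : M.RepresentsOver R a) (hb : M.RepresentsOver S b) :
    M.RepresentsOver (R × S) (a, b) := by
  obtain ⟨v, hv⟩ := ha
  obtain ⟨w, hw⟩ := hb
  refine ⟨fun i => (v i, w i), Prod.ext ?_ ?_⟩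
  · exact (map_dotProduct_mulVec_intCast M (RingHom.fst R S) _).trans hv
  · exact (map_dotProduct_mulVec_intCast M (RingHom.snd R S) _).trans hw

end RepresentsOver

theorem representsOver_zmod_of_forall_padicInt (M : Matrix ι ι ℤ) (a : ℤ) {m : ℕ} (hm : m ≠ 0)
    (hloc : ∀ (p : ℕ) [Fact p.Prime], p ∣ m → M.RepresentsOver ℤ_[p] (a : ℤ_[p])) :
    M.RepresentsOver (ZMod m) (a : ZMod m) := by
  induction m using Nat.recOnPrimeCoprime with
  | zero => exact absurd rfl hm
  | prime_pow p k hp =>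
    rcases k.eq_zero_or_pos with rfl | hk
    · have : Subsingleton (ZMod (p ^ 0)) := by rw [pow_zero]; infer_instance
      exact ⟨0, Subsingleton.elim _ _⟩
    · have : Fact p.Prime := ⟨hp⟩
      simpa using (hloc p (dvd_pow_self p hk.ne')).map (PadicInt.toZModPow k)
  | coprime k l _ _ hkl ihk ihl =>
    have hk := ihk (left_ne_zero_of_mul hm) fun p _ hp => hloc p (hp.mul_right l)
    have hl := ihl (right_ne_zero_of_mul hm) fun p _ hp => hloc p (hp.mul_left k)
    have hprod : M.RepresentsOver (ZMod k × ZMod l) (a : ZMod k × ZMod l) := hk.prod hl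
    simpa using hprod.map (ZMod.chineseRemainder hkl).symm.toRingHom

theorem RepresentsOver.exists_modEq {M : Matrix ι ι ℤ} {m : ℕ} {a : ℤ}
    (h : M.RepresentsOver (ZMod m) (a : ZMod m)) : ∃ v : ι → ℤ, v ⬝ᵥ M *ᵥ v ≡ a [ZMOD m] := by
  obtain ⟨w, hw⟩ := h
  choose v hv using fun i => ZMod.intCast_surjective (w i)
  refine ⟨v, (ZMod.intCast_eq_intCast_iff _ _ _).mp ?_⟩
  have hw' : (Int.cast ∘ v : ι → ZMod m) = w := funext hv
  have hM : M.map (Int.cast : ℤ → ℤ) = M := by ext; simp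
  simpa [hw', hw, hM] using map_dotProduct_mulVec_intCast M (Int.castRingHom (ZMod m)) v

end Matrix

theorem mem_AP_of_modEq {a m N : ℕ} (ha : a < m) (h : N ≡ a [MOD m]) : N ∈ AP a m :=
  ⟨N / m, (Nat.mod_add_div N m).symm.trans (by rw [h, Nat.mod_eq_of_lt ha])⟩

theorem excluded_AP_has_local_obstruction_general
    (n : ℕ) (M : Matrix (Fin n) (Fin n) ℤ)
    (hpos : ∀ v : Fin n → ℤ, v ≠ 0 → 0 < v ⬝ᵥ M.mulVec v)
    (a m : ℕ) (hadm : Admissible a m)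
    (hexc : ∀ N ∈ AP a m, ¬∃ v : Fin n → ℤ, v ⬝ᵥ M.mulVec v = (N : ℤ)) :
    ∃ p : ℕ, ∃ _ : Fact p.Prime, p ∣ m ∧
      ¬∃ v : Fin n → ℤ_[p],
        v ⬝ᵥ (M.map (Int.cast : ℤ → ℤ_[p])).mulVec v = (a : ℤ_[p]) := by
  obtain ⟨-, ham, -⟩ := hadm
  by_contra! hloc
  have hmodm : M.RepresentsOver (ZMod m) ((a : ℤ) : ZMod m) :=
    M.representsOver_zmod_of_forall_padicInt a (by omega) fun p _ hp => by
      rw [RepresentsOver, Int.cast_natCast]; exact hloc p _ hp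
  obtain ⟨v, hv⟩ := hmodm.exists_modEq
  have hnonneg : 0 ≤ v ⬝ᵥ M *ᵥ v := by
    rcases eq_or_ne v 0 with rfl | hv0
    · simp
    · exact (hpos v hv0).le
  lift v ⬝ᵥ M *ᵥ v to ℕ using hnonneg with N hN
  exact hexc N (mem_AP_of_modEq ham (Int.natCast_modEq_iff.mp hv)) ⟨v, hN.symm⟩

theorem excluded_AP_has_local_obstruction
    (n : ℕ) (hn : 4 ≤ n) (M : Matrix (Fin n) (Fin n) ℤ)
    (hsym : M.IsSymm)
    (hpos : ∀ v : Fin n → ℤ, v ≠ 0 → 0 < v ⬝ᵥ M.mulVec v)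
    (hgcd : Finset.univ.gcd (fun ij : Fin n × Fin n => M ij.1 ij.2) = 1)
    (a m : ℕ) (hadm : Admissible a m)
    (hexc : ∀ N ∈ AP a m, ¬∃ v : Fin n → ℤ, v ⬝ᵥ M.mulVec v = (N : ℤ)) :
    ∃ p : ℕ, ∃ _ : Fact p.Prime, p ∣ m ∧
      ¬∃ v : Fin n → ℤ_[p],
        v ⬝ᵥ (M.map (Int.cast : ℤ → ℤ_[p])).mulVec v = (a : ℤ_[p]) :=
  excluded_AP_has_local_obstruction_general n M hpos a m hadm hexc
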